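/- arXiv:2411.14177 — 5 statements merged into one kernel-verified Lean document; each statement's English description precedes it below -/
import Mathlib

section
/- Let E be a T-invariant sublinear expectation on (Ω, H). Then for any l, d ∈ ℕ, (E^{(d)})^{(l)} = E^{(gcd(l,d))}, where the outer operation is the periodic averaging construction applied to the T-invariant sublinear expectation E^{(d)}. -/
open MeasureTheory Filter Function Topology

structure IsHSpace {Ω : Type*} (T : Ω → Ω) (H : Set (Ω → ℝ)) : Prop where
  add_mem : ∀ f ∈ H, ∀ g ∈ H, f + g ∈ H
  smul_mem : ∀ (c : ℝ), ∀ f ∈ H, c • f ∈ H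
  one_mem : (fun _ : Ω => (1 : ℝ)) ∈ H
  comp_mem : ∀ f ∈ H, f ∘ T ∈ H
  abs_mem : ∀ f ∈ H, (fun ω => |f ω|) ∈ H

/-- `E` is a `T`-invariant sublinear expectation on `(Ω, H)`. -/
structure IsISE {Ω : Type*} (T : Ω → Ω) (H : Set (Ω → ℝ)) (E : (Ω → ℝ) → ℝ) : Prop where
  mono : ∀ f ∈ H, ∀ g ∈ H, (∀ ω, f ω ≤ g ω) → E f ≤ E g
  const : ∀ c : ℝ, E (fun _ => c) = c
  subadd : ∀ f ∈ H, ∀ g ∈ H, E (f + g) ≤ E f + E g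
  homog : ∀ f ∈ H, ∀ c : ℝ, 0 ≤ c → E (c • f) = c * E f
  inv : ∀ f ∈ H, E (f ∘ T) = E f

/-- The Birkhoff-type sum `∑_{k=0}^{n-1} f ∘ T^{kd}`. -/
def bsum {Ω : Type*} (T : Ω → Ω) (d : ℕ) (f : Ω → ℝ) (n : ℕ) : Ω → ℝ :=
  fun ω => ∑ k ∈ Finset.range n, f (T^[k * d] ω)

/-! The `d`-periodic mean `E^{(d)}` does not see a shift by a multiple of `d` of a single summand:
replacing `h` by `h ∘ T^d` changes the Birkhoff sums of `F + h` only by `h ∘ T^{nd} - h`, whose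
expectation is bounded in `n`. Write `l = l' g`, `d = d' g` with `l'`, `d'` coprime. Modulo `d`,
the exponents `j l`, `j < d' a`, reduce to `(j l' mod d') g`, which runs through each `r g`,
`r < d'`, exactly `a` times. Hence
`E^{(d)}(∑_{j<d'a} f ∘ T^{jl}) = a E^{(d)}(∑_{r<d'} f ∘ T^{rg}) = a d' E^{(g)}(f)`,
and dividing by `d' a` computes `(E^{(d)})^{(l)}(f)` along the subsequence `n = d' a`. -/

open Finset

section Birkhoff

variable {Ω : Type*} (T : Ω → Ω)

theorem bsum_eq_sum (d : ℕ) (f : Ω → ℝ) (n : ℕ) :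
    bsum T d f n = ∑ k ∈ range n, f ∘ T^[k * d] := by
  ext ω
  simp [bsum, Finset.sum_apply]

theorem bsum_add (d : ℕ) (f g : Ω → ℝ) (n : ℕ) :
    bsum T d (f + g) n = bsum T d f n + bsum T d g n := by
  ext ω
  simp [bsum, sum_add_distrib]

theorem bsum_smul (d : ℕ) (c : ℝ) (f : Ω → ℝ) (n : ℕ) :
    bsum T d (c • f) n = c • bsum T d f n := by
  ext ω
  simp [bsum, mul_sum]

theorem bsum_comp_iterate (d : ℕ) (f : Ω → ℝ) (n : ℕ) :
    bsum T d (f ∘ T^[d]) n = bsum T d f n + (f ∘ T^[n * d] - f) := by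
  ext ω
  have hsucc := (sum_range_succ' (fun k => f (T^[k * d] ω)) n).symm.trans (sum_range_succ _ n)
  simp only [bsum, Pi.add_apply, Pi.sub_apply, Function.comp_apply, ← iterate_add_apply]
  simp only [add_one_mul, add_comm d, zero_mul, iterate_zero, id] at hsucc ⊢
  linarith

theorem bsum_mul (g : ℕ) (f : Ω → ℝ) (m n : ℕ) :
    bsum T g f (m * n) = bsum T (n * g) (bsum T g f n) m := by
  induction m with
  | zero => ext ω; simp [bsum]
  | succ m ih =>
    ext ω
    rw [add_one_mul, bsum, sum_range_add, ← bsum, ih]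
    simp only [bsum, sum_range_succ, ← iterate_add_apply]
    congr 1
    refine sum_congr rfl fun r _ => ?_
    congr 2
    ring

end Birkhoff

namespace IsHSpace

variable {Ω : Type*} {T : Ω → Ω} {H : Set (Ω → ℝ)}

theorem zero_mem (hH : IsHSpace T H) : (0 : Ω → ℝ) ∈ H := by
  simpa using hH.smul_mem 0 _ hH.one_mem

theorem sub_mem (hH : IsHSpace T H) {f g : Ω → ℝ} (hf : f ∈ H) (hg : g ∈ H) : f - g ∈ H := by
  simpa [sub_eq_add_neg] using hH.add_mem f hf _ (hH.smul_mem (-1) g hg)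

theorem sum_mem (hH : IsHSpace T H) {ι : Type*} {s : Finset ι} {F : ι → Ω → ℝ}
    (hF : ∀ i ∈ s, F i ∈ H) : ∑ i ∈ s, F i ∈ H :=
  sum_induction F (· ∈ H) (fun f g hf hg => hH.add_mem f hf g hg) hH.zero_mem hF

theorem comp_iterate_mem (hH : IsHSpace T H) {f : Ω → ℝ} (hf : f ∈ H) (n : ℕ) :
    f ∘ T^[n] ∈ H := by
  induction n with
  | zero => simpa using hf
  | succ n ih => rw [iterate_succ, ← Function.comp_assoc]; exact hH.comp_mem _ ih

theorem bsum_mem (hH : IsHSpace T H) {f : Ω → ℝ} (hf : f ∈ H) (d n : ℕ) :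
    bsum T d f n ∈ H := by
  rw [bsum_eq_sum]
  exact hH.sum_mem fun k _ => hH.comp_iterate_mem hf _

end IsHSpace

namespace IsISE

variable {Ω : Type*} {T : Ω → Ω} {H : Set (Ω → ℝ)} {E : (Ω → ℝ) → ℝ}

theorem comp_iterate (hH : IsHSpace T H) (hE : IsISE T H E) {f : Ω → ℝ} (hf : f ∈ H) (n : ℕ) :
    E (f ∘ T^[n]) = E f := by
  induction n with
  | zero => rfl
  | succ n ih =>
    rw [iterate_succ, ← Function.comp_assoc, hE.inv _ (hH.comp_iterate_mem hf n), ih]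

theorem abs_sub_le (hH : IsHSpace T H) (hE : IsISE T H E) {F G : Ω → ℝ} (hF : F ∈ H)
    (hG : G ∈ H) : |E F - E G| ≤ E (fun ω => |F ω - G ω|) := by
  have hFG : F - G ∈ H := hH.sub_mem hF hG
  have hGF : G - F ∈ H := hH.sub_mem hG hF
  have habs : (fun ω => |F ω - G ω|) ∈ H := hH.abs_mem _ hFG
  have h₁ : E F ≤ E G + E (fun ω => |F ω - G ω|) :=
    calc E F = E (G + (F - G)) := by rw [add_sub_cancel]
      _ ≤ E G + E (F - G) := hE.subadd _ hG _ hFG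
      _ ≤ E G + E (fun ω => |F ω - G ω|) :=
        add_le_add le_rfl (hE.mono _ hFG _ habs fun ω => le_abs_self _)
  have h₂ : E G ≤ E F + E (fun ω => |F ω - G ω|) :=
    calc E G = E (F + (G - F)) := by rw [add_sub_cancel]
      _ ≤ E F + E (G - F) := hE.subadd _ hF _ hGF
      _ ≤ E F + E (fun ω => |F ω - G ω|) :=
        add_le_add le_rfl
          (hE.mono _ hGF _ habs fun ω => (le_abs_self _).trans_eq (abs_sub_comm _ _))
  rw [abs_sub_le_iff]
  constructor <;> linarith

theorem abs_comp_iterate_sub_le (hH : IsHSpace T H) (hE : IsISE T H E) {f : Ω → ℝ} (hf : f ∈ H)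
    (n : ℕ) : E (fun ω => |f (T^[n] ω) - f ω|) ≤ 2 * E (fun ω => |f ω|) := by
  have habs : (fun ω => |f ω|) ∈ H := hH.abs_mem f hf
  have habs_comp : (fun ω => |f ω|) ∘ T^[n] ∈ H := hH.comp_iterate_mem habs n
  calc E (fun ω => |f (T^[n] ω) - f ω|)
      ≤ E ((fun ω => |f ω|) ∘ T^[n] + fun ω => |f ω|) :=
        hE.mono _ (hH.abs_mem _ (hH.sub_mem (hH.comp_iterate_mem hf n) hf)) _
          (hH.add_mem _ habs_comp _ habs) fun ω => abs_sub _ _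
    _ ≤ E ((fun ω => |f ω|) ∘ T^[n]) + E (fun ω => |f ω|) := hE.subadd _ habs_comp _ habs
    _ = 2 * E (fun ω => |f ω|) := by rw [hE.comp_iterate hH habs]; ring

end IsISE

theorem tendsto_div_natCast_of_abs_sub_le {x y : ℕ → ℝ} {C L : ℝ} (hxy : ∀ n, |x n - y n| ≤ C)
    (hx : Tendsto (fun n : ℕ => x n / n) atTop (𝓝 L)) :
    Tendsto (fun n : ℕ => y n / n) atTop (𝓝 L) := by
  have h₀ : Tendsto (fun n : ℕ => (y n - x n) / n) atTop (𝓝 0) := by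
    refine squeeze_zero_norm (fun n => ?_) (tendsto_const_div_atTop_nhds_zero_nat C)
    rw [norm_div, Real.norm_eq_abs, Real.norm_natCast, abs_sub_comm]
    exact div_le_div_of_nonneg_right (hxy n) n.cast_nonneg
  simpa [← add_div] using hx.add h₀

theorem Nat.Coprime.sum_range_mul_mod {M : Type*} [AddCommMonoid M] {l d : ℕ}
    (hld : Nat.Coprime l d) (φ : ℕ → M) : ∑ t ∈ range d, φ (t * l % d) = ∑ r ∈ range d, φ r := by
  have hmaps : Set.MapsTo (fun t => t * l % d) (range d) (range d) := fun t ht =>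
    mem_range.2 (Nat.mod_lt _ (pos_of_ne_zero (by rintro rfl; simp at ht)))
  have hinj : Set.InjOn (fun t => t * l % d) (range d) := fun s hs t ht hst =>
    Nat.ModEq.eq_of_lt_of_lt (Nat.ModEq.cancel_right_of_coprime hld.symm hst)
      (mem_range.1 hs) (mem_range.1 ht)
  exact sum_nbij _ hmaps hinj (surjOn_of_injOn_of_card_le _ hmaps hinj le_rfl) fun _ _ => rfl

theorem Nat.Coprime.sum_range_mul_mul_mod {M : Type*} [AddCommMonoid M] {l d : ℕ}
    (hld : Nat.Coprime l d) (φ : ℕ → M) (a : ℕ) :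
    ∑ j ∈ range (d * a), φ (j * l % d) = a • ∑ r ∈ range d, φ r := by
  induction a with
  | zero => simp
  | succ a ih =>
    rw [mul_add_one, sum_range_add, ih, succ_nsmul, ← hld.sum_range_mul_mod φ]
    congr 1
    refine sum_congr rfl fun t _ => ?_
    rw [add_mul, mul_assoc, Nat.mul_add_mod]

/-- `Ed = E^{(d)}` on `H`. -/
def IsPeriodicMean {Ω : Type*} (T : Ω → Ω) (H : Set (Ω → ℝ)) (E : (Ω → ℝ) → ℝ) (d : ℕ)
    (Ed : (Ω → ℝ) → ℝ) : Prop :=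
  ∀ f ∈ H, Tendsto (fun n : ℕ => E (bsum T d f n) / n) atTop (𝓝 (Ed f))

namespace IsPeriodicMean

variable {Ω : Type*} {T : Ω → Ω} {H : Set (Ω → ℝ)} {E Ed Eg : (Ω → ℝ) → ℝ} {d : ℕ}

theorem eq_of_abs_bsum_sub_le (hEd : IsPeriodicMean T H E d Ed) (hH : IsHSpace T H)
    (hE : IsISE T H E) {X Y : Ω → ℝ} (hX : X ∈ H) (hY : Y ∈ H) {C : ℝ}
    (hC : ∀ n, E (fun ω => |bsum T d X n ω - bsum T d Y n ω|) ≤ C) : Ed X = Ed Y :=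
  (tendsto_nhds_unique (hEd Y hY) (tendsto_div_natCast_of_abs_sub_le
    (fun n => (hE.abs_sub_le hH (hH.bsum_mem hX d n) (hH.bsum_mem hY d n)).trans (hC n))
    (hEd X hX))).symm

theorem smul (hEd : IsPeriodicMean T H E d Ed) (hH : IsHSpace T H) (hE : IsISE T H E)
    {X : Ω → ℝ} (hX : X ∈ H) {c : ℝ} (hc : 0 ≤ c) : Ed (c • X) = c * Ed X := by
  refine tendsto_nhds_unique (hEd _ (hH.smul_mem c X hX)) ?_
  simpa [bsum_smul, hE.homog _ (hH.bsum_mem hX d _) c hc, mul_div_assoc] using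
    (hEd X hX).const_mul c

theorem add_comp_iterate (hEd : IsPeriodicMean T H E d Ed) (hH : IsHSpace T H) (hE : IsISE T H E)
    {F h : Ω → ℝ} (hF : F ∈ H) (hh : h ∈ H) : Ed (F + h ∘ T^[d]) = Ed (F + h) := by
  refine hEd.eq_of_abs_bsum_sub_le (C := 2 * E (fun ω => |h ω|)) hH hE
    (hH.add_mem _ hF _ (hH.comp_iterate_mem hh d)) (hH.add_mem _ hF _ hh) (fun n => ?_)
  convert hE.abs_comp_iterate_sub_le hH hh (n * d) using 3 with ω
  simp only [bsum_add, bsum_comp_iterate, Pi.add_apply, Pi.sub_apply, Function.comp_apply]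
  congr 1
  ring

theorem add_comp_iterate_mul (hEd : IsPeriodicMean T H E d Ed) (hH : IsHSpace T H)
    (hE : IsISE T H E) {F h : Ω → ℝ} (hF : F ∈ H) (hh : h ∈ H) (q : ℕ) :
    Ed (F + h ∘ T^[q * d]) = Ed (F + h) := by
  induction q with
  | zero => simp
  | succ q ih =>
    rw [add_one_mul, iterate_add, ← Function.comp_assoc,
      hEd.add_comp_iterate hH hE hF (hH.comp_iterate_mem hh _), ih]

theorem sum_comp_iterate_mul (hEd : IsPeriodicMean T H E d Ed) (hH : IsHSpace T H)
    (hE : IsISE T H E) {ι : Type*} (s : Finset ι) {h : ι → Ω → ℝ} (hh : ∀ i ∈ s, h i ∈ H)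
    (q : ι → ℕ) : Ed (∑ i ∈ s, h i ∘ T^[q i * d]) = Ed (∑ i ∈ s, h i) := by
  suffices ∀ F ∈ H, Ed (F + ∑ i ∈ s, h i ∘ T^[q i * d]) = Ed (F + ∑ i ∈ s, h i) by
    simpa using this 0 hH.zero_mem
  induction s using cons_induction with
  | empty => simp
  | cons a s ha ih =>
    intro F hF
    have hha : h a ∈ H := hh a (mem_cons_self a s)
    have hhs : ∀ i ∈ s, h i ∈ H := fun i hi => hh i (mem_cons_of_mem hi)
    have hS : ∑ i ∈ s, h i ∘ T^[q i * d] ∈ H :=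
      hH.sum_mem fun i hi => hH.comp_iterate_mem (hhs i hi) _
    calc Ed (F + ∑ i ∈ cons a s ha, h i ∘ T^[q i * d])
        = Ed ((F + ∑ i ∈ s, h i ∘ T^[q i * d]) + h a ∘ T^[q a * d]) := by
          rw [sum_cons]; abel_nf
      _ = Ed ((F + h a) + ∑ i ∈ s, h i ∘ T^[q i * d]) := by
          rw [hEd.add_comp_iterate_mul hH hE (hH.add_mem _ hF _ hS) hha]; abel_nf
      _ = Ed (F + ∑ i ∈ cons a s ha, h i) := by
          rw [ih hhs _ (hH.add_mem _ hF _ hha), sum_cons]; abel_nf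

theorem apply_bsum {g n : ℕ} (hEd : IsPeriodicMean T H E (n * g) Ed)
    (hEg : IsPeriodicMean T H E g Eg) (hH : IsHSpace T H) {f : Ω → ℝ} (hf : f ∈ H)
    (hn : 0 < n) : Ed (bsum T g f n) = n * Eg f := by
  refine tendsto_nhds_unique (hEd _ (hH.bsum_mem hf g n)) ?_
  have hmul : Tendsto (fun m : ℕ => m * n) atTop atTop :=
    tendsto_atTop_mono (fun m => Nat.le_mul_of_pos_right m hn) tendsto_id
  simp only [← bsum_mul]
  refine (((hEg f hf).comp hmul).const_mul (n : ℝ)).congr' ?_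
  filter_upwards [eventually_ge_atTop 1] with m hm
  have hm0 : (m : ℝ) ≠ 0 := by positivity
  have hn0 : (n : ℝ) ≠ 0 := by positivity
  simp only [Function.comp_apply, Nat.cast_mul]
  field_simp

theorem apply_bsum_of_coprime {l d g l' d' : ℕ} (hEd : IsPeriodicMean T H E d Ed)
    (hEg : IsPeriodicMean T H E g Eg) (hH : IsHSpace T H) (hE : IsISE T H E) {f : Ω → ℝ}
    (hf : f ∈ H) (hcop : Nat.Coprime l' d') (hl : l = l' * g) (hd : d = d' * g) (hd' : 0 < d')
    (a : ℕ) : Ed (bsum T l f (d' * a)) = (d' * a : ℕ) * Eg f := by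
  have hsplit : ∀ j, f ∘ T^[j * l] = (f ∘ T^[(j * l' % d') * g]) ∘ T^[(j * l' / d') * d] := by
    intro j
    rw [Function.comp_assoc, ← iterate_add, hl, hd]
    congr 2
    calc j * (l' * g) = (j * l' % d' + d' * (j * l' / d')) * g := by rw [Nat.mod_add_div]; ring
      _ = _ := by ring
  calc Ed (bsum T l f (d' * a))
      = Ed (∑ j ∈ range (d' * a), (f ∘ T^[(j * l' % d') * g]) ∘ T^[(j * l' / d') * d]) := by
        simp only [bsum_eq_sum, hsplit]
    _ = Ed (∑ j ∈ range (d' * a), f ∘ T^[(j * l' % d') * g]) :=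
        hEd.sum_comp_iterate_mul hH hE _ (fun j _ => hH.comp_iterate_mem hf _) _
    _ = Ed ((a : ℝ) • bsum T g f d') := by
        rw [hcop.sum_range_mul_mul_mod (fun r => f ∘ T^[r * g]), bsum_eq_sum,
          Nat.cast_smul_eq_nsmul]
    _ = (d' * a : ℕ) * Eg f := by
        have hEd' : IsPeriodicMean T H E (d' * g) Ed := hd ▸ hEd
        rw [hEd.smul hH hE (hH.bsum_mem hf g d') a.cast_nonneg, hEd'.apply_bsum hEg hH hf hd']
        push_cast
        ring

end IsPeriodicMean

theorem stmt7_general {Ω : Type*} (T : Ω → Ω) (H : Set (Ω → ℝ))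
    (hH : IsHSpace T H) (E : (Ω → ℝ) → ℝ) (hE : IsISE T H E)
    (l d : ℕ) (hd : 0 < d)
    (Ed Edl Eg : (Ω → ℝ) → ℝ)
    (hEd : ∀ f ∈ H, Tendsto (fun n : ℕ => E (bsum T d f n) / n) atTop (𝓝 (Ed f)))
    (hEdl : ∀ f ∈ H, Tendsto (fun n : ℕ => Ed (bsum T l f n) / n) atTop (𝓝 (Edl f)))
    (hEg : ∀ f ∈ H,
      Tendsto (fun n : ℕ => E (bsum T (Nat.gcd l d) f n) / n) atTop (𝓝 (Eg f))) :
    ∀ f ∈ H, Edl f = Eg f := by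
  intro f hf
  obtain ⟨l', d', hcop, hl, hd'⟩ := Nat.exists_coprime l d
  have hd'_pos : 0 < d' := Nat.pos_of_ne_zero (by rintro rfl; omega)
  have hval := IsPeriodicMean.apply_bsum_of_coprime hEd hEg hH hE hf hcop hl hd' hd'_pos
  have hsub : Tendsto (fun a : ℕ => d' * (a + 1)) atTop atTop :=
    tendsto_atTop_mono (fun a => Nat.le_mul_of_pos_left _ hd'_pos) (tendsto_add_atTop_nat 1)
  refine tendsto_nhds_unique ((hEdl f hf).comp hsub) (tendsto_const_nhds.congr fun a => ?_)
  rw [Function.comp_apply, hval, mul_div_cancel_left₀ _ (by positivity)]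

theorem stmt7 {Ω : Type*} (T : Ω → Ω) (H : Set (Ω → ℝ))
    (hH : IsHSpace T H) (E : (Ω → ℝ) → ℝ) (hE : IsISE T H E)
    (l d : ℕ) (hl : 0 < l) (hd : 0 < d)
    (Ed Edl Eg : (Ω → ℝ) → ℝ)
    (hEd : ∀ f ∈ H, Tendsto (fun n : ℕ => E (bsum T d f n) / n) atTop (𝓝 (Ed f)))
    (hEdl : ∀ f ∈ H, Tendsto (fun n : ℕ => Ed (bsum T l f n) / n) atTop (𝓝 (Edl f)))
    (hEg : ∀ f ∈ H,
      Tendsto (fun n : ℕ => E (bsum T (Nat.gcd l d) f n) / n) atTop (𝓝 (Eg f))) :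
    ∀ f ∈ H, Edl f = Eg f :=
  stmt7_general T H hH E hE l d hd Ed Edl Eg hEd hEdl hEg
end

section
/- Let E be a T-invariant sublinear expectation on (Ω, H) and d ∈ ℕ. Then E[f∘T^d − f] = 0 for all f ∈ H if and only if E[f] = E^{(d)}[f] for all f ∈ H. -/
open MeasureTheory Filter Function Topology

section Aux

variable {Ω : Type*} {T : Ω → Ω} {H : Set (Ω → ℝ)} {E : (Ω → ℝ) → ℝ}

lemma aux_sub_mem (hH : IsHSpace T H) {f g : Ω → ℝ} (hf : f ∈ H) (hg : g ∈ H) :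
    (fun ω => f ω - g ω) ∈ H := by
  have h := hH.add_mem f hf ((-1 : ℝ) • g) (hH.smul_mem (-1) g hg)
  have he : f + (-1 : ℝ) • g = fun ω => f ω - g ω := by
    funext ω; simp [sub_eq_add_neg]
  rwa [he] at h

lemma aux_iter_mem (hH : IsHSpace T H) {f : Ω → ℝ} (hf : f ∈ H) (k : ℕ) :
    f ∘ T^[k] ∈ H := by
  induction k with
  | zero => simpa using hf
  | succ k ih =>
      have : f ∘ T^[k + 1] = (f ∘ T^[k]) ∘ T := by
        rw [Function.iterate_succ]; rfl
      rw [this]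
      exact hH.comp_mem _ ih

lemma aux_E_iter (hH : IsHSpace T H) (hE : IsISE T H E) {f : Ω → ℝ} (hf : f ∈ H) (k : ℕ) :
    E (f ∘ T^[k]) = E f := by
  induction k with
  | zero => simp
  | succ k ih =>
      have h1 : f ∘ T^[k + 1] = (f ∘ T^[k]) ∘ T := by
        rw [Function.iterate_succ]; rfl
      rw [h1, hE.inv _ (aux_iter_mem hH hf k), ih]

lemma aux_E_zero (hE : IsISE T H E) : E (fun _ : Ω => (0 : ℝ)) = 0 := hE.const 0

lemma aux_zero_mem (hH : IsHSpace T H) : (fun _ : Ω => (0 : ℝ)) ∈ H := by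
  have h := hH.smul_mem 0 _ hH.one_mem
  have : (0 : ℝ) • (fun _ : Ω => (1 : ℝ)) = fun _ : Ω => (0 : ℝ) := by
    funext ω; simp
  rwa [this] at h

lemma aux_pair_nonneg (hH : IsHSpace T H) (hE : IsISE T H E) {f : Ω → ℝ} (hf : f ∈ H) :
    0 ≤ E f + E ((-1 : ℝ) • f) := by
  have h := hE.subadd f hf ((-1 : ℝ) • f) (hH.smul_mem (-1) f hf)
  have he : f + (-1 : ℝ) • f = fun _ : Ω => (0 : ℝ) := by funext ω; simp
  rw [he, aux_E_zero hE] at h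
  linarith

lemma aux_bsum_succ (T : Ω → Ω) (d : ℕ) (f : Ω → ℝ) (n : ℕ) :
    bsum T d f (n + 1) = bsum T d f n + f ∘ T^[n * d] := by
  funext ω
  simp [bsum, Finset.sum_range_succ]

lemma aux_bsum_mem (hH : IsHSpace T H) {f : Ω → ℝ} (hf : f ∈ H) (d n : ℕ) :
    bsum T d f n ∈ H := by
  induction n with
  | zero =>
      have : bsum T d f 0 = fun _ : Ω => (0 : ℝ) := by funext ω; simp [bsum]
      rw [this]; exact aux_zero_mem hH
  | succ n ih =>
      rw [aux_bsum_succ]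
      exact hH.add_mem _ ih _ (aux_iter_mem hH hf _)

end Aux

theorem stmt8 {Ω : Type*} (T : Ω → Ω) (H : Set (Ω → ℝ))
    (hH : IsHSpace T H) (E : (Ω → ℝ) → ℝ) (hE : IsISE T H E)
    (d : ℕ) (hd : 0 < d) (Ed : (Ω → ℝ) → ℝ)
    (hEd : ∀ f ∈ H, Tendsto (fun n : ℕ => E (bsum T d f n) / n) atTop (𝓝 (Ed f))) :
    (∀ f ∈ H, E (fun ω => f (T^[d] ω) - f ω) = 0) ↔ (∀ f ∈ H, E f = Ed f) := by
  constructor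
  · intro h0 f hf
    -- reversed differences also vanish
    have hdiff : ∀ g ∈ H, E (fun ω => g ω - g (T^[d] ω)) = 0 := by
      intro g hg
      have h := h0 ((-1 : ℝ) • g) (hH.smul_mem (-1) g hg)
      have he : (fun ω => ((-1 : ℝ) • g) (T^[d] ω) - ((-1 : ℝ) • g) ω)
          = fun ω => g ω - g (T^[d] ω) := by
        funext ω; simp; ring
      rwa [he] at h
    -- E (f - f∘T^[k*d]) ≤ 0 for all k
    have hdk : ∀ k : ℕ, E (fun ω => f ω - f (T^[k * d] ω)) ≤ 0 := by
      intro k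
      induction k with
      | zero =>
          have : (fun ω => f ω - f (T^[0 * d] ω)) = fun _ : Ω => (0 : ℝ) := by
            funext ω; simp
          rw [this, aux_E_zero hE]
      | succ k ih =>
          set u : Ω → ℝ := fun ω => f ω - f (T^[k * d] ω) with hu
          set v : Ω → ℝ := fun ω => f (T^[k * d] ω) - f (T^[(k + 1) * d] ω) with hv
          have hmu : u ∈ H := aux_sub_mem hH hf (aux_iter_mem hH hf (k * d))
          have hmv : v ∈ H :=
            aux_sub_mem hH (aux_iter_mem hH hf (k * d)) (aux_iter_mem hH hf ((k + 1) * d))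
          have hEv : E v = 0 := by
            have h := hdiff (f ∘ T^[k * d]) (aux_iter_mem hH hf (k * d))
            have he : (fun ω => (f ∘ T^[k * d]) ω - (f ∘ T^[k * d]) (T^[d] ω)) = v := by
              funext ω
              have : (k + 1) * d = k * d + d := by ring
              simp only [hv, Function.comp_apply, this, ← Function.iterate_add_apply]
            rwa [he] at h
          have he : (fun ω => f ω - f (T^[(k + 1) * d] ω)) = u + v := by
            funext ω; simp [hu, hv]
          rw [he]
          have := hE.subadd u hmu v hmv
          linarith
    -- lower bound: n * E f ≤ E (bsum n)
    have hlow : ∀ n : ℕ, (n : ℝ) * E f ≤ E (bsum T d f n) := by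
      intro n
      set w : Ω → ℝ := fun ω => (n : ℝ) * f ω - bsum T d f n ω with hw
      have hwle : ∀ m : ℕ, E (fun ω => (m : ℝ) * f ω - bsum T d f m ω) ≤ 0 := by
        intro m
        induction m with
        | zero =>
            have : (fun ω => ((0 : ℕ) : ℝ) * f ω - bsum T d f 0 ω) = fun _ : Ω => (0 : ℝ) := by
              funext ω; simp [bsum]
            rw [this, aux_E_zero hE]
        | succ m ih =>
            have hm1 : (fun ω => (m : ℝ) * f ω - bsum T d f m ω) ∈ H := by
              have h := aux_sub_mem hH (hH.smul_mem (m : ℝ) f hf) (aux_bsum_mem hH hf d m)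
              have he : (fun ω => ((m : ℝ) • f) ω - bsum T d f m ω)
                  = fun ω => (m : ℝ) * f ω - bsum T d f m ω := by
                funext ω; simp
              rwa [he] at h
            have hm2 : (fun ω => f ω - f (T^[m * d] ω)) ∈ H :=
              aux_sub_mem hH hf (aux_iter_mem hH hf (m * d))
            have he : (fun ω => ((m + 1 : ℕ) : ℝ) * f ω - bsum T d f (m + 1) ω)
                = (fun ω => (m : ℝ) * f ω - bsum T d f m ω)
                  + fun ω => f ω - f (T^[m * d] ω) := by
              funext ω
              simp [aux_bsum_succ, Function.comp]
              push_cast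
              ring
            rw [he]
            have h1 := hE.subadd _ hm1 _ hm2
            have h2 := hdk m
            linarith
      have key : (n : ℝ) • f = bsum T d f n + w := by
        funext ω; simp [hw]
      have h1 : E ((n : ℝ) • f) ≤ E (bsum T d f n) + E w := by
        rw [key]
        exact hE.subadd _ (aux_bsum_mem hH hf d n) _
          (by
            have h := aux_sub_mem hH (hH.smul_mem (n : ℝ) f hf) (aux_bsum_mem hH hf d n)
            have he : (fun ω => ((n : ℝ) • f) ω - bsum T d f n ω) = w := by
              funext ω; simp [hw]
            rwa [he] at h)
      have h2 : E ((n : ℝ) • f) = (n : ℝ) * E f := hE.homog f hf _ (Nat.cast_nonneg n)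
      have h3 : E w ≤ 0 := hwle n
      linarith
    -- upper bound : E (bsum n) ≤ n * E f
    have hup : ∀ n : ℕ, E (bsum T d f n) ≤ (n : ℝ) * E f := by
      intro n
      induction n with
      | zero =>
          have : bsum T d f 0 = fun _ : Ω => (0 : ℝ) := by funext ω; simp [bsum]
          rw [this, aux_E_zero hE]; simp
      | succ n ih =>
          rw [aux_bsum_succ]
          have h1 := hE.subadd _ (aux_bsum_mem hH hf d n) _ (aux_iter_mem hH hf (n * d))
          have h2 := aux_E_iter hH hE hf (n * d)
          push_cast
          linarith
    have heq : ∀ n : ℕ, E (bsum T d f n) = (n : ℝ) * E f := fun n =>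
      le_antisymm (hup n) (hlow n)
    have htend : Tendsto (fun n : ℕ => E (bsum T d f n) / n) atTop (𝓝 (E f)) := by
      apply Tendsto.congr' _ (tendsto_const_nhds (x := E f))
      filter_upwards [eventually_ge_atTop 1] with n hn
      have hn' : (0 : ℝ) < n := by exact_mod_cast hn
      rw [heq n]
      field_simp
    exact tendsto_nhds_unique htend (hEd f hf)
  · intro h f hf
    set g : Ω → ℝ := fun ω => f (T^[d] ω) - f ω with hg
    have hgm : g ∈ H := aux_sub_mem hH (aux_iter_mem hH hf d) hf
    have key : ∀ n : ℕ, ∀ ω, bsum T d g n ω = f (T^[n * d] ω) - f ω := by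
      intro n ω
      have h1 : ∀ k : ℕ, g (T^[k * d] ω) = f (T^[(k + 1) * d] ω) - f (T^[k * d] ω) := by
        intro k
        have e : T^[(k + 1) * d] ω = T^[d] (T^[k * d] ω) := by
          rw [← Function.iterate_add_apply]; congr 1; ring
        simp [hg, e]
      calc bsum T d g n ω
          = ∑ k ∈ Finset.range n, (f (T^[(k + 1) * d] ω) - f (T^[k * d] ω)) :=
            Finset.sum_congr rfl fun k _ => h1 k
        _ = f (T^[n * d] ω) - f (T^[0 * d] ω) :=
            Finset.sum_range_sub (fun k => f (T^[k * d] ω)) n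
        _ = f (T^[n * d] ω) - f ω := by simp
    set C : ℝ := E f + E ((-1 : ℝ) • f) with hC
    have hEneg : ∀ n : ℕ, E (((-1 : ℝ) • f) ∘ T^[n * d]) = E ((-1 : ℝ) • f) :=
      fun n => aux_E_iter hH hE (hH.smul_mem (-1) f hf) (n * d)
    have hub : ∀ n : ℕ, E (bsum T d g n) ≤ C := by
      intro n
      have he : bsum T d g n = (f ∘ T^[n * d]) + (-1 : ℝ) • f := by
        funext ω; simp [key n ω]; ring
      rw [he]
      have h1 := hE.subadd _ (aux_iter_mem hH hf (n * d)) _ (hH.smul_mem (-1) f hf)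
      have h2 := aux_E_iter hH hE hf (n * d)
      rw [hC]; linarith
    have hlb : ∀ n : ℕ, -C ≤ E (bsum T d g n) := by
      intro n
      have hbm : bsum T d g n ∈ H := aux_bsum_mem hH hgm d n
      have hpair := aux_pair_nonneg hH hE hbm
      have he : (-1 : ℝ) • bsum T d g n = f + (-1 : ℝ) • (f ∘ T^[n * d]) := by
        funext ω; simp [key n ω]; ring
      have h1 : E ((-1 : ℝ) • bsum T d g n) ≤ C := by
        rw [he]
        have h2 := hE.subadd f hf _ (hH.smul_mem (-1) _ (aux_iter_mem hH hf (n * d)))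
        have h3 : ((-1 : ℝ) • (f ∘ T^[n * d])) = ((-1 : ℝ) • f) ∘ T^[n * d] := by
          funext ω; simp
        have h4 : E ((-1 : ℝ) • (f ∘ T^[n * d])) = E ((-1 : ℝ) • f) := by
          rw [h3]; exact hEneg n
        rw [hC]
        linarith
      linarith
    have htend0 : Tendsto (fun n : ℕ => E (bsum T d g n) / n) atTop (𝓝 0) := by
      have hA : Tendsto (fun n : ℕ => -C / (n : ℝ)) atTop (𝓝 0) :=
        tendsto_const_div_atTop_nhds_zero_nat (-C)
      have hB : Tendsto (fun n : ℕ => C / (n : ℝ)) atTop (𝓝 0) :=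
        tendsto_const_div_atTop_nhds_zero_nat C
      refine tendsto_of_tendsto_of_tendsto_of_le_of_le' hA hB ?_ ?_
      · filter_upwards [eventually_ge_atTop 1] with n hn
        have hn' : (0 : ℝ) < n := by exact_mod_cast hn
        exact div_le_div_of_nonneg_right (hlb n) hn'.le
      · filter_upwards [eventually_ge_atTop 1] with n hn
        have hn' : (0 : ℝ) < n := by exact_mod_cast hn
        exact div_le_div_of_nonneg_right (hub n) hn'.le
    have : Ed g = 0 := tendsto_nhds_unique (hEd g hgm) htend0
    rw [h g hgm, this]
end

section
/- Let E = sup_{P∈Θ} E_P be a continuous T-invariant sublinear expectation on (Ω, B_b(Ω)), where Θ is the set of all probabilities dominated by E on bounded measurable functions. Then for each P ∈ Θ there exists a T-invariant probability P' ∈ Θ such that P = P' on the T-invariant σ-algebra I. -/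
/-!
Average the push-forwards `P ∘ T⁻ᵏ`: each Cesàro mean `Pₙ` is dominated by `E` (as `E` is
`T`-invariant) and equals `P` on invariant sets, while `|Pₙ (T⁻¹ A) - Pₙ A| ≤ 1 / n`. Instead of a
Banach–Mazur limit, take setwise limits along an ultrafilter finer than `atTop`. The limit is an
additive content bounded by the upper probability `V`, so the continuity of `E` makes it countably
additive; it is `T`-invariant by the estimate above, and it is dominated by `E` because bounded
measurable functions are uniform limits of simple functions.
-/

open MeasureTheory Filter Function Topology

/-- The space of bounded measurable real functions on `Ω`. -/
def Bb (Ω : Type*) [MeasurableSpace Ω] : Set (Ω → ℝ) :=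
  {f | Measurable f ∧ ∃ C, ∀ ω, |f ω| ≤ C}

open scoped ENNReal

theorem ENNReal.sum_range_succ_le_sum_range_add_one {a : ℕ → ℝ≥0∞} (ha : ∀ k, a k ≤ 1) (n : ℕ) :
    ∑ k ∈ Finset.range n, a (k + 1) ≤ ∑ k ∈ Finset.range n, a k + 1 :=
  calc ∑ k ∈ Finset.range n, a (k + 1)
      ≤ ∑ k ∈ Finset.range n, a (k + 1) + a 0 := le_self_add
    _ = ∑ k ∈ Finset.range n, a k + a n := by
      rw [← Finset.sum_range_succ', Finset.sum_range_succ a n]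
    _ ≤ ∑ k ∈ Finset.range n, a k + 1 := by gcongr; exact ha n

theorem ENNReal.sum_range_le_sum_range_succ_add_one {a : ℕ → ℝ≥0∞} (ha : ∀ k, a k ≤ 1) (n : ℕ) :
    ∑ k ∈ Finset.range n, a k ≤ ∑ k ∈ Finset.range n, a (k + 1) + 1 :=
  calc ∑ k ∈ Finset.range n, a k
      ≤ ∑ k ∈ Finset.range n, a k + a n := le_self_add
    _ = ∑ k ∈ Finset.range n, a (k + 1) + a 0 := by
      rw [← Finset.sum_range_succ', Finset.sum_range_succ a n]
    _ ≤ ∑ k ∈ Finset.range n, a (k + 1) + 1 := by gcongr; exact ha 0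

theorem comp_iterate_mem {Ω β : Type*} {T : Ω → Ω} {H : Set (Ω → β)} (hH : ∀ f ∈ H, f ∘ T ∈ H)
    {f : Ω → β} (hf : f ∈ H) (k : ℕ) : f ∘ T^[k] ∈ H := by
  induction k with
  | zero => exact hf
  | succ k ih => rw [iterate_succ]; exact hH _ ih

theorem IsISE.apply_comp_iterate {Ω : Type*} {T : Ω → Ω} {H : Set (Ω → ℝ)} {E : (Ω → ℝ) → ℝ}
    (hE : IsISE T H E) (hH : ∀ f ∈ H, f ∘ T ∈ H) {f : Ω → ℝ} (hf : f ∈ H) (k : ℕ) :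
    E (f ∘ T^[k]) = E f := by
  induction k with
  | zero => rfl
  | succ k ih => rw [iterate_succ, ← comp_assoc, hE.inv _ (comp_iterate_mem hH hf k), ih]

section

variable {Ω : Type*} [MeasurableSpace Ω]

theorem MeasureTheory.SimpleFunc.exists_le_le_add {f : Ω → ℝ} (hf : Measurable f) {C : ℝ}
    (hC : ∀ ω, |f ω| ≤ C) {ε : ℝ} (hε : 0 < ε) :
    ∃ g : SimpleFunc Ω ℝ, ∀ ω, g ω ≤ f ω ∧ f ω ≤ g ω + ε := by
  set g : Ω → ℝ := fun ω => ε * ⌊f ω / ε⌋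
  have hg : Measurable g := measurable_const.mul (measurable_from_top.comp (hf.div_const ε).floor)
  have hrange : (Set.range g).Finite := by
    refine ((Set.finite_Icc ⌊-C / ε⌋ ⌊C / ε⌋).image fun z : ℤ => ε * z).subset ?_
    rintro _ ⟨ω, rfl⟩
    obtain ⟨hlo, hhi⟩ := abs_le.1 (hC ω)
    exact ⟨_, ⟨Int.floor_le_floor (div_le_div_of_nonneg_right hlo hε.le),
      Int.floor_le_floor (div_le_div_of_nonneg_right hhi hε.le)⟩, rfl⟩
  refine ⟨⟨g, fun x => hg (measurableSet_singleton x), hrange⟩, fun ω => ⟨?_, ?_⟩⟩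
  · calc g ω ≤ ε * (f ω / ε) := mul_le_mul_of_nonneg_left (Int.floor_le _) hε.le
      _ = f ω := mul_div_cancel₀ _ hε.ne'
  · calc f ω = ε * (f ω / ε - 1) + ε := by field_simp; ring
      _ ≤ g ω + ε := by
        gcongr
        exact mul_le_mul_of_nonneg_left (Int.sub_one_lt_floor _).le hε.le

theorem MeasureTheory.SimpleFunc.tendsto_integral_of_tendsto_measure {ι : Type*} {l : Filter ι}
    {ν : ι → Measure Ω} [∀ i, IsFiniteMeasure (ν i)] {μ : Measure Ω} [IsFiniteMeasure μ]
    (h : ∀ s, MeasurableSet s → Tendsto (fun i => ν i s) l (𝓝 (μ s))) (g : SimpleFunc Ω ℝ) :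
    Tendsto (fun i => ∫ ω, g ω ∂ν i) l (𝓝 (∫ ω, g ω ∂μ)) := by
  simp only [g.integral_eq_sum (g.integrable_of_isFiniteMeasure)]
  refine tendsto_finsetSum _ fun x _ => (Tendsto.smul_const ?_ x)
  exact (ENNReal.tendsto_toReal (measure_ne_top μ _)).comp (h _ (g.measurableSet_fiber x))

theorem integral_le_of_tendsto_measure {ι : Type*} {l : Filter ι} [l.NeBot]
    {ν : ι → Measure Ω} [∀ i, IsFiniteMeasure (ν i)] {μ : Measure Ω} [IsProbabilityMeasure μ]
    (h : ∀ s, MeasurableSet s → Tendsto (fun i => ν i s) l (𝓝 (μ s)))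
    {f : Ω → ℝ} (hf : Measurable f) {C : ℝ} (hC : ∀ ω, |f ω| ≤ C) {c : ℝ}
    (hc : ∀ i, ∫ ω, f ω ∂ν i ≤ c) : ∫ ω, f ω ∂μ ≤ c := by
  have hfint : ∀ ρ : Measure Ω, IsFiniteMeasure ρ → Integrable f ρ := fun ρ _ =>
    .of_bound hf.aestronglyMeasurable C (ae_of_all _ hC)
  refine le_of_forall_pos_le_add fun ε hε => ?_
  obtain ⟨g, hg⟩ := SimpleFunc.exists_le_le_add hf hC hε
  have hgc : ∫ ω, g ω ∂μ ≤ c := by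
    refine le_of_tendsto (SimpleFunc.tendsto_integral_of_tendsto_measure h g)
      (Eventually.of_forall fun i => (integral_mono ?_ (hfint _ inferInstance) ?_).trans (hc i))
    · exact g.integrable_of_isFiniteMeasure
    · exact fun ω => (hg ω).1
  calc ∫ ω, f ω ∂μ ≤ ∫ ω, (g ω + ε) ∂μ :=
        integral_mono (hfint _ inferInstance) (g.integrable_of_isFiniteMeasure.add
          (integrable_const ε)) fun ω => (hg ω).2
    _ = ∫ ω, g ω ∂μ + ε := by
        rw [integral_add g.integrable_of_isFiniteMeasure (integrable_const ε)]
        simp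
    _ ≤ c + ε := by linarith

theorem isSetRing_measurableSet : IsSetRing {s : Set Ω | MeasurableSet s} :=
  ⟨.empty, fun _ _ => .union, fun _ _ => .diff⟩

theorem exists_isProbabilityMeasure_tendsto_ultrafilter {ι : Type*} (U : Ultrafilter ι)
    (ν : ι → Measure Ω) [∀ i, IsProbabilityMeasure (ν i)]
    (hν : ∀ s : ℕ → Set Ω, (∀ n, MeasurableSet (s n)) → Antitone s → (⋂ n, s n) = ∅ →
      Tendsto (fun n => ⨆ i, ν i (s n)) atTop (𝓝 0)) :
    ∃ μ : Measure Ω, IsProbabilityMeasure μ ∧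
      ∀ s, MeasurableSet s → Tendsto (fun i => ν i s) U (𝓝 (μ s)) := by
  set lim : Set Ω → ℝ≥0∞ := fun s => (U.map fun i => ν i s).lim
  have hlim (s : Set Ω) : Tendsto (fun i => ν i s) U (𝓝 (lim s)) :=
    Ultrafilter.le_nhds_lim (U.map fun i => ν i s)
  have hlim_eq {s : Set Ω} {a : ℝ≥0∞} (h : Tendsto (fun i => ν i s) U (𝓝 a)) : lim s = a :=
    tendsto_nhds_unique (hlim s) h
  let m : AddContent ℝ≥0∞ {s : Set Ω | MeasurableSet s} :=
    isSetRing_measurableSet.addContent_of_union lim (hlim_eq (by simp))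
      fun _ ht hst => hlim_eq (by simpa [measure_union hst ht] using (hlim _).add (hlim _))
  have hm_le (s : Set Ω) : m s ≤ ⨆ i, ν i s :=
    le_of_tendsto' (hlim s) fun i => le_iSup (fun i => ν i s) i
  have hm_ne_top (s : Set Ω) : m s ≠ ∞ :=
    ((hm_le s).trans (iSup_le fun _ => prob_le_one)).trans_lt ENNReal.one_lt_top |>.ne
  have hm_iUnion := addContent_iUnion_eq_sum_of_tendsto_zero isSetRing_measurableSet m
    (fun s _ => hm_ne_top s) fun s hs hanti hempty =>
      tendsto_of_tendsto_of_tendsto_of_le_of_le tendsto_const_nhds (hν s hs hanti hempty)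
        (fun _ => zero_le) fun n => hm_le (s n)
  refine ⟨Measure.ofMeasurable (fun s _ => m s) m.empty' fun f hf hd =>
    hm_iUnion hf (.iUnion hf) hd, ⟨?_⟩, fun s hs => ?_⟩
  · rw [Measure.ofMeasurable_apply _ .univ]
    exact hlim_eq (by simp)
  · rw [Measure.ofMeasurable_apply _ hs]
    exact hlim s

/-- The paper's Cesàro mean `P_{n+1}`, indexed so that every member is a probability measure. -/
noncomputable def cesaroMeasure (T : Ω → Ω) (P : Measure Ω) (n : ℕ) : Measure Ω :=
  ((n : ℝ≥0∞) + 1)⁻¹ • ∑ k ∈ Finset.range (n + 1), P.map T^[k]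

namespace cesaroMeasure

variable {T : Ω → Ω}

theorem apply (hT : Measurable T) (P : Measure Ω) (n : ℕ) {s : Set Ω} (hs : MeasurableSet s) :
    cesaroMeasure T P n s = ((n : ℝ≥0∞) + 1)⁻¹ * ∑ k ∈ Finset.range (n + 1), P (T^[k] ⁻¹' s) := by
  simp [cesaroMeasure, Measure.map_apply (hT.iterate _) hs]

theorem isProbabilityMeasure (hT : Measurable T) (P : Measure Ω) (n : ℕ) [IsProbabilityMeasure P] :
    IsProbabilityMeasure (cesaroMeasure T P n) :=
  ⟨by simp [apply hT P n .univ, ENNReal.inv_mul_cancel]⟩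

theorem apply_of_preimage_eq (hT : Measurable T) (P : Measure Ω) (n : ℕ) [IsProbabilityMeasure P]
    {s : Set Ω} (hs : MeasurableSet s) (hinv : T ⁻¹' s = s) : cesaroMeasure T P n s = P s := by
  have hk (k : ℕ) : T^[k] ⁻¹' s = s := by
    rw [Set.preimage_iterate_eq]; exact iterate_fixed hinv k
  rw [apply hT P n hs]
  simp [hk, ← mul_assoc, ENNReal.inv_mul_cancel]

theorem integral_le (hT : Measurable T) (P : Measure Ω) (n : ℕ) [IsProbabilityMeasure P]
    {f : Ω → ℝ} (hf : Measurable f) {C : ℝ} (hC : ∀ ω, |f ω| ≤ C) {c : ℝ}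
    (h : ∀ k, ∫ ω, f (T^[k] ω) ∂P ≤ c) :
    ∫ ω, f ω ∂cesaroMeasure T P n ≤ c := by
  have hint (k : ℕ) : Integrable f (P.map T^[k]) :=
    have : IsProbabilityMeasure (P.map T^[k]) :=
      Measure.isProbabilityMeasure_map (hT.iterate k).aemeasurable
    .of_bound hf.aestronglyMeasurable C (ae_of_all _ hC)
  have hsum : ∑ k ∈ Finset.range (n + 1), ∫ ω, f ω ∂P.map T^[k] ≤ (n + 1) * c := by
    simp only [integral_map (hT.iterate _).aemeasurable hf.aestronglyMeasurable]
    simpa using Finset.sum_le_sum fun k (_ : k ∈ Finset.range (n + 1)) => h k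
  have hn : ((n : ℝ≥0∞) + 1).toReal = n + 1 := by
    rw [← Nat.cast_add_one, ENNReal.toReal_natCast]; push_cast; rfl
  rw [cesaroMeasure, integral_smul_measure, integral_finsetSum_measure fun k _ => hint k,
    ENNReal.toReal_inv, hn, smul_eq_mul, inv_mul_le_iff₀ (by positivity)]
  exact hsum

theorem apply_preimage_le (hT : Measurable T) (P : Measure Ω) (n : ℕ) [IsProbabilityMeasure P]
    {s : Set Ω} (hs : MeasurableSet s) :
    cesaroMeasure T P n (T ⁻¹' s) ≤ cesaroMeasure T P n s + ((n : ℝ≥0∞) + 1)⁻¹ := by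
  rw [apply hT P n (hT hs), apply hT P n hs, ← mul_add_one]
  simp only [← Set.preimage_comp, ← iterate_succ' T]
  gcongr
  exact ENNReal.sum_range_succ_le_sum_range_add_one (fun _ => prob_le_one) _

theorem apply_le_preimage (hT : Measurable T) (P : Measure Ω) (n : ℕ) [IsProbabilityMeasure P]
    {s : Set Ω} (hs : MeasurableSet s) :
    cesaroMeasure T P n s ≤ cesaroMeasure T P n (T ⁻¹' s) + ((n : ℝ≥0∞) + 1)⁻¹ := by
  rw [apply hT P n (hT hs), apply hT P n hs, ← mul_add_one]
  simp only [← Set.preimage_comp, ← iterate_succ' T]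
  gcongr
  exact ENNReal.sum_range_le_sum_range_succ_add_one (fun _ => prob_le_one) _

theorem map_eq_of_tendsto (hT : Measurable T) (P : Measure Ω) [IsProbabilityMeasure P]
    {l : Filter ℕ} [l.NeBot] (hl : l ≤ atTop) {μ : Measure Ω}
    (h : ∀ s, MeasurableSet s → Tendsto (fun n => cesaroMeasure T P n s) l (𝓝 (μ s))) :
    μ.map T = μ := by
  have hinv : Tendsto (fun n : ℕ => ((n : ℝ≥0∞) + 1)⁻¹) l (𝓝 0) := by
    simpa [comp_def] using
      (ENNReal.tendsto_inv_nat_nhds_zero.comp (tendsto_add_atTop_nat 1)).mono_left hl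
  ext s hs
  rw [Measure.map_apply hT hs]
  refine le_antisymm ?_ ?_
  · simpa using le_of_tendsto_of_tendsto (h _ (hT hs)) ((h s hs).add hinv)
      (Eventually.of_forall fun n => apply_preimage_le hT P n hs)
  · simpa using le_of_tendsto_of_tendsto (h s hs) ((h _ (hT hs)).add hinv)
      (Eventually.of_forall fun n => apply_le_preimage hT P n hs)

end cesaroMeasure

theorem comp_mem_Bb {T : Ω → Ω} (hT : Measurable T) {f : Ω → ℝ} (hf : f ∈ Bb Ω) : f ∘ T ∈ Bb Ω :=
  ⟨hf.1.comp hT, hf.2.imp fun _ hC ω => hC (T ω)⟩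

end


theorem stmt11 {Ω : Type*} [MeasurableSpace Ω] (T : Ω → Ω) (hT : Measurable T)
    (E : (Ω → ℝ) → ℝ) (hE : IsISE T (Bb Ω) E)
    (Θ : Set (Measure Ω))
    (hΘ : Θ = {P | IsProbabilityMeasure P ∧ ∀ f ∈ Bb Ω, ∫ ω, f ω ∂P ≤ E f})
    (hcont : ∀ A : ℕ → Set Ω, (∀ n, MeasurableSet (A n)) → Antitone A →
      (⋂ n, A n) = ∅ →
      Tendsto (fun n => ⨆ P : Θ, P.1 (A n)) atTop (𝓝 (0 : ENNReal))) :
    ∀ P ∈ Θ, ∃ P' ∈ Θ, Measure.map T P' = P' ∧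
      ∀ A : Set Ω, MeasurableSet A → T ⁻¹' A = A → P' A = P A := by
  intro P hPΘ
  obtain ⟨hP, hPE⟩ : IsProbabilityMeasure P ∧ ∀ f ∈ Bb Ω, ∫ ω, f ω ∂P ≤ E f := by
    rwa [hΘ] at hPΘ
  have (n : ℕ) : IsProbabilityMeasure (cesaroMeasure T P n) :=
    cesaroMeasure.isProbabilityMeasure hT P n
  have hdom (n : ℕ) (f : Ω → ℝ) (hf : f ∈ Bb Ω) : ∫ ω, f ω ∂cesaroMeasure T P n ≤ E f := by
    refine cesaroMeasure.integral_le hT P n hf.1 hf.2.choose_spec fun k => ?_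
    rw [← hE.apply_comp_iterate (fun _ => comp_mem_Bb hT) hf k]
    exact hPE _ (comp_iterate_mem (fun _ => comp_mem_Bb hT) hf k)
  have hcesaro (n : ℕ) : cesaroMeasure T P n ∈ Θ := hΘ ▸ ⟨inferInstance, hdom n⟩
  obtain ⟨μ, hμ, hlim⟩ := exists_isProbabilityMeasure_tendsto_ultrafilter (.of atTop)
    (cesaroMeasure T P) fun s hs hanti hempty =>
      tendsto_of_tendsto_of_tendsto_of_le_of_le tendsto_const_nhds (hcont s hs hanti hempty)
        (fun _ => zero_le) fun k => iSup_le fun n => le_iSup (fun Q : Θ => Q.1 (s k)) ⟨_, hcesaro n⟩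
  refine ⟨μ, hΘ ▸ ⟨hμ, fun f hf => integral_le_of_tendsto_measure hlim hf.1 hf.2.choose_spec
    fun n => hdom n f hf⟩, cesaroMeasure.map_eq_of_tendsto hT P (Ultrafilter.of_le _) hlim,
    fun s hs hinv => tendsto_nhds_unique (hlim s hs) ?_⟩
  simp only [cesaroMeasure.apply_of_preimage_eq hT P _ hs hinv, tendsto_const_nhds]
end

section
/- Let E be a continuous strongly T-ergodic sublinear expectation on (Ω, B_b(Ω)) such that for every d ∈ ℕ the set of extreme points of Θ^{(d)} is a finite set of pairwise mutually singular probabilities, with Θ^{(d)} ⊆ Θ^{(l)} whenever d | l, and suppose there is no d with Θ^{(l)} ⊆ Θ^{(d)} for all l. Then there exists a strictly increasing divisibility chain n_1 | n_2 | … with card(ext Θ^{(n_k)}) strictly increasing, yielding infinitely many pairwise disjoint sets of upper probability 1, contradicting continuity of E. Hence there exists d ∈ ℕ such that Θ^{(l)} ⊆ Θ^{(d)} for all l ∈ ℕ. -/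
open MeasureTheory Filter Function Topology

open NNReal

/-!
Invariance under `T^[a]` implies invariance under `T^[a * b]`, so if no `Θ^{(d)}` contained all the
others there would be a chain `D₀ ∣ D₁ ∣ ⋯` along which `Θ^{(D k)}` strictly increases. Each
`Θ^{(D k)}` is the simplex of mixtures of finitely many pairwise mutually singular probabilities, and
such a simplex containing the vertices of another one with at least as many vertices equals it; so
the number of vertices is unbounded. A later vertex is either absolutely continuous with respect to
a given earlier vertex or singular to it, which lets us choose infinitely many pairwise mutually
singular vertices one at a time, keeping unboundedly many later vertices singular to all those
chosen. Their supports give disjoint sets `C n` with `Pₙ (C n) = 1`, and `⋃ m ≥ n, C m ↓ ∅`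
contradicts the continuity of `E`.
-/

open scoped ENNReal
open Measure

section Mixtures

variable {Ω : Type*} [MeasurableSpace Ω] {ι κ : Type*}

def mixtures [Fintype ι] (P : ι → Measure Ω) : Set (Measure Ω) :=
  {Q | ∃ α : ι → ℝ≥0, ∑ i, α i = 1 ∧ Q = ∑ i, α i • P i}

lemma mem_mixtures_self [Fintype ι] [DecidableEq ι] (P : ι → Measure Ω) (i : ι) :
    P i ∈ mixtures P :=
  ⟨Pi.single i 1, by simp, by simp [Pi.single_apply]⟩

lemma mixtures_subset_mixtures [Fintype ι] [Fintype κ] {P : ι → Measure Ω} {R : κ → Measure Ω}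
    (h : ∀ j, R j ∈ mixtures P) : mixtures R ⊆ mixtures P := by
  choose γ hγ1 hγ using h
  rintro Q ⟨β, hβ1, rfl⟩
  refine ⟨fun i => ∑ j, β j * γ j i, ?_, ?_⟩
  · rw [Finset.sum_comm]
    simp [← Finset.mul_sum, hγ1, hβ1]
  · simp_rw [hγ, Finset.smul_sum, smul_smul, Finset.sum_smul]
    exact Finset.sum_comm

lemma absolutelyContinuous_sum_smul [Fintype ι] {α : ι → ℝ≥0} (P : ι → Measure Ω) {j : ι}
    (hj : α j ≠ 0) : P j ≪ ∑ i, α i • P i := by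
  have hle : α j • P j ≤ ∑ i, α i • P i :=
    Finset.single_le_sum (f := fun i => α i • P i) (fun _ _ => Measure.zero_le _) (Finset.mem_univ j)
  rw [ENNReal.smul_def] at hle
  exact (absolutelyContinuous_smul (by simpa using hj)).trans (absolutelyContinuous_of_le hle)

lemma sum_smul_mutuallySingular [Fintype ι] {α : ι → ℝ≥0} {P : ι → Measure Ω} {ν : Measure Ω}
    (h : ∀ i, α i ≠ 0 → P i ⟂ₘ ν) : (∑ i, α i • P i) ⟂ₘ ν := by
  rw [← Measure.sum_fintype, MutuallySingular.sum_left]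
  intro i
  by_cases hi : α i = 0
  · simp [hi]
  · exact (h i hi).smul_nnreal _

lemma exists_absolutelyContinuous_of_mem_mixtures [Fintype ι] {P : ι → Measure Ω} {Q : Measure Ω}
    (hQ : Q ∈ mixtures P) : ∃ j, P j ≪ Q := by
  obtain ⟨α, hα1, rfl⟩ := hQ
  obtain ⟨j, -, hj⟩ := Finset.exists_ne_zero_of_sum_ne_zero (hα1 ▸ one_ne_zero)
  exact ⟨j, absolutelyContinuous_sum_smul P hj⟩

lemma absolutelyContinuous_or_mutuallySingular_of_mem_mixtures [Fintype ι] {P : ι → Measure Ω}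
    (hP : Pairwise (P · ⟂ₘ P ·)) {Q : Measure Ω} (hQ : Q ∈ mixtures P) (j : ι) :
    P j ≪ Q ∨ P j ⟂ₘ Q := by
  obtain ⟨α, -, rfl⟩ := hQ
  by_cases hj : α j = 0
  · exact .inr (sum_smul_mutuallySingular fun i hi => hP fun hij => hi (hij ▸ hj)).symm
  · exact .inl (absolutelyContinuous_sum_smul P hj)

lemma eq_of_absolutelyContinuous_of_pairwise {P : ι → Measure Ω} (hP : Pairwise (P · ⟂ₘ P ·))
    {μ : Measure Ω} (hμ : μ ≠ 0) {i i' : ι} (h : μ ≪ P i) (h' : μ ≪ P i') : i = i' := by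
  by_contra hne
  exact hμ ((MutuallySingular.self_iff μ).mp ((hP hne).mono_ac h h'))

lemma mixtures_subset_of_card_le [Fintype ι] [Fintype κ] {P : ι → Measure Ω}
    {R : κ → Measure Ω} (hP : Pairwise (P · ⟂ₘ P ·)) (hR : ∀ j, R j ≠ 0)
    (hPR : ∀ i, P i ∈ mixtures R) (hcard : Fintype.card κ ≤ Fintype.card ι) :
    mixtures R ⊆ mixtures P := by
  classical
  choose σ hσ using fun i => exists_absolutelyContinuous_of_mem_mixtures (hPR i)
  have hinj : Injective σ := fun i i' h =>
    eq_of_absolutelyContinuous_of_pairwise hP (hR (σ i)) (hσ i) (h ▸ hσ i')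
  have hsurj : Surjective σ := ((Fintype.bijective_iff_injective_and_card σ).mpr
    ⟨hinj, le_antisymm (Fintype.card_le_of_injective σ hinj) hcard⟩).2
  refine mixtures_subset_mixtures fun j => ?_
  obtain ⟨i, rfl⟩ := hsurj j
  obtain ⟨α, hα1, hαP⟩ := hPR i
  have hsupp : ∀ j, j ≠ σ i → α j = 0 := by
    intro j hj
    by_contra hα
    obtain ⟨i', rfl⟩ := hsurj j
    have hi' : i' = i := eq_of_absolutelyContinuous_of_pairwise hP (hR (σ i')) (hσ i')
      (hαP ▸ absolutelyContinuous_sum_smul R hα)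
    exact hj (hi' ▸ rfl)
  have hα_one : α (σ i) = 1 := by
    rwa [Finset.sum_eq_single (σ i) (fun j _ hj => hsupp j hj) (by simp)] at hα1
  have hPi : P i = R (σ i) := by
    rw [hαP, Finset.sum_eq_single (σ i) (fun j _ hj => by rw [hsupp j hj, zero_smul]) (by simp),
      hα_one, one_smul]
  exact hPi ▸ mem_mixtures_self P i

end Mixtures

section Refining

variable {Ω : Type*} [MeasurableSpace Ω]

lemma exists_seq_pairwise_mutuallySingular {S : Set (Measure Ω)} {p : Measure Ω → Prop}
    (h0 : p 0) (hstep : ∀ ν, p ν → ∃ Q ∈ S, Q ⟂ₘ ν ∧ p (ν + Q)) :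
    ∃ f : ℕ → Measure Ω, (∀ n, f n ∈ S) ∧ Pairwise (f · ⟂ₘ f ·) := by
  choose! next hnextS hnext_sing hnext_p using hstep
  let ν : ℕ → Measure Ω := fun n => Nat.rec 0 (fun _ μ => μ + next μ) n
  have hp : ∀ n, p (ν n) := fun n => Nat.rec h0 (fun _ ih => hnext_p _ ih) n
  have hmono : Monotone ν := monotone_nat_of_le_succ fun n => Measure.le_add_right le_rfl
  -- `next (ν m)` is one of the summands of `ν n` for `m < n`, while `next (ν n) ⟂ₘ ν n`
  have hsing_of_lt : ∀ m n, m < n → next (ν n) ⟂ₘ next (ν m) := fun m n hmn =>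
    (hnext_sing _ (hp n)).mono_ac .rfl
      (absolutelyContinuous_of_le ((Measure.le_add_left le_rfl).trans (hmono hmn)))
  refine ⟨fun n => next (ν n), fun n => hnextS _ (hp n), fun m n hmn => ?_⟩
  rcases hmn.lt_or_gt with h | h
  exacts [(hsing_of_lt m n h).symm, hsing_of_lt n m h]

variable {ι : ℕ → Type*} [∀ k, Fintype (ι k)]

noncomputable def singularCount (R : ∀ k, ι k → Measure Ω) (ν : Measure Ω) (k : ℕ) : ℕ :=
  {j | R k j ⟂ₘ ν}.ncard

variable {R : ∀ k, ι k → Measure Ω}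

lemma singularCount_mono (hR : ∀ k j, R k j ≠ 0) (hsing : ∀ k, Pairwise (R k · ⟂ₘ R k ·))
    (hmix : ∀ k k', k ≤ k' → ∀ i, R k i ∈ mixtures (R k')) (ν : Measure Ω) :
    Monotone (singularCount R ν) := by
  intro k k' hk
  choose σ hσ using fun i => exists_absolutelyContinuous_of_mem_mixtures (hmix k k' hk i)
  have hinj : Injective σ := fun i i' h =>
    eq_of_absolutelyContinuous_of_pairwise (hsing k) (hR k' (σ i)) (hσ i) (h ▸ hσ i')
  exact Set.ncard_le_ncard_of_injOn σ (fun i hi => hi.mono_ac (hσ i) .rfl) hinj.injOn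

lemma singularCount_le_add (hsing : ∀ k, Pairwise (R k · ⟂ₘ R k ·))
    (hmix : ∀ k k', k ≤ k' → ∀ i, R k i ∈ mixtures (R k')) (ν : Measure Ω) {k₀ k : ℕ}
    (hk : k₀ ≤ k) {a b : ι k₀} (hab : a ≠ b) :
    singularCount R ν k ≤ singularCount R (ν + R k₀ a) k + singularCount R (ν + R k₀ b) k := by
  refine (Set.ncard_le_ncard ?_).trans (Set.ncard_union_le _ _)
  intro j (hj : R k j ⟂ₘ ν)
  rcases absolutelyContinuous_or_mutuallySingular_of_mem_mixtures (hsing k) (hmix k₀ k hk a) j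
    with hac | hsa
  · exact .inr (hj.add_right ((hsing k₀ hab).mono_ac hac .rfl))
  · exact .inl (hj.add_right hsa)

lemma exists_mutuallySingular_unbounded_singularCount (hR : ∀ k j, R k j ≠ 0)
    (hsing : ∀ k, Pairwise (R k · ⟂ₘ R k ·))
    (hmix : ∀ k k', k ≤ k' → ∀ i, R k i ∈ mixtures (R k')) {ν : Measure Ω}
    (hν : ∀ n, ∃ k, n ≤ singularCount R ν k) :
    ∃ Q ∈ {Q | ∃ k j, R k j = Q}, Q ⟂ₘ ν ∧ ∀ n, ∃ k, n ≤ singularCount R (ν + Q) k := by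
  obtain ⟨k₀, hk₀⟩ := hν 2
  obtain ⟨a, b, ha, hb, hab⟩ := (Set.one_lt_ncard_iff).mp hk₀
  suffices (∀ n, ∃ k, n ≤ singularCount R (ν + R k₀ a) k) ∨
      ∀ n, ∃ k, n ≤ singularCount R (ν + R k₀ b) k by
    rcases this with h | h
    exacts [⟨_, ⟨k₀, a, rfl⟩, ha, h⟩, ⟨_, ⟨k₀, b, rfl⟩, hb, h⟩]
  by_contra! h
  obtain ⟨⟨na, hna⟩, ⟨nb, hnb⟩⟩ := h
  obtain ⟨k₁, hk₁⟩ := hν (na + nb)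
  have hsplit := singularCount_le_add hsing hmix ν (le_max_left k₀ k₁) hab
  have hgrow := singularCount_mono hR hsing hmix ν (le_max_right k₀ k₁)
  have := hna (max k₀ k₁)
  have := hnb (max k₀ k₁)
  omega

theorem exists_pairwise_mutuallySingular_of_refining (hR : ∀ k j, R k j ≠ 0)
    (hsing : ∀ k, Pairwise (R k · ⟂ₘ R k ·))
    (hmix : ∀ k k', k ≤ k' → ∀ i, R k i ∈ mixtures (R k'))
    (hcard : ∀ n, ∃ k, n ≤ Fintype.card (ι k)) :
    ∃ f : ℕ → Measure Ω, (∀ n, ∃ k j, R k j = f n) ∧ Pairwise (f · ⟂ₘ f ·) := by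
  refine exists_seq_pairwise_mutuallySingular (p := fun ν => ∀ n, ∃ k, n ≤ singularCount R ν k)
    (fun n => ?_) fun ν hν => exists_mutuallySingular_unbounded_singularCount hR hsing hmix hν
  obtain ⟨k, hk⟩ := hcard n
  refine ⟨k, hk.trans_eq ?_⟩
  simp [singularCount, MutuallySingular.zero_right]

end Refining

section Continuity

variable {Ω : Type*} [MeasurableSpace Ω]

lemma exists_pairwise_disjoint_of_pairwise_mutuallySingular {f : ℕ → Measure Ω}
    (hf : Pairwise (f · ⟂ₘ f ·)) : ∃ C : ℕ → Set Ω,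
      (∀ n, MeasurableSet (C n)) ∧ Pairwise (Disjoint on C) ∧ ∀ n, f n (C n)ᶜ = 0 := by
  have hsep : ∀ m n, m ≠ n → ∃ s, MeasurableSet s ∧ f m s = 0 ∧ f n sᶜ = 0 := fun m n h => hf h
  choose! s hs hfs hfsc using hsep
  refine ⟨fun m => ⋂ n, ⋂ (_ : n ≠ m), (s m n)ᶜ ∩ s n m, fun m => ?_, fun m n hmn => ?_, fun m => ?_⟩
  · exact .iInter fun n => .iInter fun hn => (hs m n hn.symm).compl.inter (hs n m hn)
  · refine Set.disjoint_left.mpr fun x hxm hxn => ?_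
    simp only [Set.mem_iInter] at hxm hxn
    exact (hxm n hmn.symm).1 (hxn m hmn).2
  · simp only [Set.compl_iInter, Set.compl_inter, compl_compl]
    exact measure_iUnion_null fun n => measure_iUnion_null fun hn =>
      measure_union_null (hfs m n hn.symm) (hfsc n m hn)

lemma not_pairwise_mutuallySingular_of_tendsto {Θ : Set (Measure Ω)}
    (hcont : ∀ A : ℕ → Set Ω, (∀ n, MeasurableSet (A n)) → Antitone A → (⋂ n, A n) = ∅ →
      Tendsto (fun n => ⨆ P : Θ, P.1 (A n)) atTop (𝓝 0))
    {f : ℕ → Measure Ω} (hfΘ : ∀ n, f n ∈ Θ) (hprob : ∀ n, IsProbabilityMeasure (f n)) :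
    ¬ Pairwise (f · ⟂ₘ f ·) := by
  intro hsing
  obtain ⟨C, hCm, hCd, hCf⟩ := exists_pairwise_disjoint_of_pairwise_mutuallySingular hsing
  set A : ℕ → Set Ω := fun n => ⋃ m ≥ n, C m
  have hAm : ∀ n, MeasurableSet (A n) := fun n => .biUnion (Set.to_countable _) fun m _ => hCm m
  have hAanti : Antitone A := fun n n' h => Set.biUnion_subset_biUnion_left fun m hm => h.trans hm
  have hAempty : (⋂ n, A n) = ∅ := by
    refine Set.eq_empty_of_forall_notMem fun x hx => ?_
    simp only [A, Set.mem_iInter, Set.mem_iUnion] at hx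
    obtain ⟨m, -, hm⟩ := hx 0
    obtain ⟨m', hm', hm'x⟩ := hx (m + 1)
    exact Set.disjoint_left.mp (hCd (by omega : m ≠ m')) hm hm'x
  have hA_one : ∀ n, 1 ≤ ⨆ P : Θ, P.1 (A n) := fun n => calc
    1 = f n (C n) := ((prob_compl_eq_zero_iff (hCm n)).mp (hCf n)).symm
    _ ≤ f n (A n) := measure_mono (Set.subset_biUnion_of_mem (le_refl n))
    _ ≤ ⨆ P : Θ, P.1 (A n) := le_iSup (fun P : Θ => P.1 (A n)) ⟨f n, hfΘ n⟩
  obtain ⟨n, hn⟩ := ((hcont A hAm hAanti hAempty).eventually (gt_mem_nhds zero_lt_one)).exists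
  exact (hA_one n).not_gt hn

end Continuity

lemma exists_strictMono_comp_of_forall_not_subset {α : Type*} {S : ℕ → Set α}
    (hmul : ∀ a b, S a ⊆ S (a * b)) (h : ∀ d, 0 < d → ∃ l, 0 < l ∧ ¬ S l ⊆ S d) :
    ∃ D : ℕ → ℕ, (∀ k, 0 < D k) ∧ StrictMono (S ∘ D) := by
  choose! l hl hS using h
  let D : ℕ → ℕ := fun k => Nat.rec 1 (fun _ d => d * l d) k
  have hD : ∀ k, 0 < D k := fun k => Nat.rec one_pos (fun _ ih => mul_pos ih (hl _ ih)) k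
  refine ⟨D, hD, strictMono_nat_of_lt_succ fun k => lt_of_le_not_ge (hmul _ _) fun hsub => ?_⟩
  exact hS _ (hD k) ((mul_comm (D k) _ ▸ hmul (l (D k)) (D k)).trans hsub)

lemma map_iterate_mul_eq_self {Ω : Type*} [MeasurableSpace Ω] {T : Ω → Ω} (hT : Measurable T)
    {μ : Measure Ω} {a : ℕ} (h : μ.map (T^[a]) = μ) (b : ℕ) : μ.map (T^[a * b]) = μ := by
  rw [iterate_mul]
  exact (MeasurePreserving.iterate ⟨hT.iterate a, h⟩ b).map_eq

theorem stmt15_general {Ω : Type*} [MeasurableSpace Ω] (T : Ω → Ω) (hT : Measurable T)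
    (Θ : Set (Measure Ω))
    -- continuity of `E`
    (hcont : ∀ A : ℕ → Set Ω, (∀ n, MeasurableSet (A n)) → Antitone A →
      (⋂ n, A n) = ∅ →
      Tendsto (fun n => ⨆ P : Θ, P.1 (A n)) atTop (𝓝 (0 : ENNReal)))
    -- strong ergodicity: each `Θ^{(d)}` is the convex hull of finitely many
    -- pairwise mutually singular (ergodic) probabilities
    (hext : ∀ d : ℕ, 0 < d → ∃ (nd : ℕ) (Pd : Fin nd → Measure Ω),
      (∀ i, IsProbabilityMeasure (Pd i)) ∧
      (Pairwise fun i j => (Pd i).MutuallySingular (Pd j)) ∧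
      {Q ∈ Θ | Measure.map (T^[d]) Q = Q} =
        {Q | ∃ α : Fin nd → ℝ≥0, (∑ i, α i) = 1 ∧ Q = ∑ i, α i • Pd i}) :
    ∃ d : ℕ, 0 < d ∧ ∀ l : ℕ, 0 < l →
      {Q ∈ Θ | Measure.map (T^[l]) Q = Q} ⊆ {Q ∈ Θ | Measure.map (T^[d]) Q = Q} := by
  let S : ℕ → Set (Measure Ω) := fun d => {Q ∈ Θ | Measure.map (T^[d]) Q = Q}
  by_contra! hnot
  choose! nd P hprob hsing hS using hext
  obtain ⟨D, hD, hDmono⟩ := exists_strictMono_comp_of_forall_not_subset (S := S)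
    (fun a b Q hQ => ⟨hQ.1, map_iterate_mul_eq_self hT hQ.2 b⟩) hnot
  have hSD : ∀ k, S (D k) = mixtures (P (D k)) := fun k => hS _ (hD k)
  have hR : ∀ k j, P (D k) j ≠ 0 := fun k j => (hprob _ (hD k) j).ne_zero
  have hPS : ∀ k i, P (D k) i ∈ S (D k) := fun k i => hSD k ▸ mem_mixtures_self _ i
  have hmix : ∀ k k', k ≤ k' → ∀ i, P (D k) i ∈ mixtures (P (D k')) := fun k k' hk i =>
    hSD k' ▸ hDmono.monotone hk (hPS k i)
  have hcard : StrictMono fun k => nd (D k) := strictMono_nat_of_lt_succ fun k =>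
    lt_of_not_ge fun hle => (hDmono k.lt_succ_self).not_ge <| by
      change S (D (k + 1)) ⊆ S (D k)
      rw [hSD, hSD]
      exact mixtures_subset_of_card_le (hsing _ (hD k)) (hR (k + 1)) (hmix k (k + 1) k.le_succ)
        (by simpa using hle)
  obtain ⟨f, hfP, hf⟩ := exists_pairwise_mutuallySingular_of_refining (R := fun k => P (D k)) hR
    (fun k => hsing _ (hD k)) hmix fun n => ⟨n, by simpa using hcard.le_apply⟩
  choose k j hkj using hfP
  refine not_pairwise_mutuallySingular_of_tendsto hcont (fun n => ?_) (fun n => ?_) hf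
  · exact hkj n ▸ (hPS (k n) (j n)).1
  · exact hkj n ▸ hprob _ (hD (k n)) (j n)

theorem stmt15 {Ω : Type*} [MeasurableSpace Ω] (T : Ω → Ω) (hT : Measurable T)
    (E : (Ω → ℝ) → ℝ) (hE : IsISE T (Bb Ω) E)
    (Θ : Set (Measure Ω))
    (hΘ : Θ = {P | IsProbabilityMeasure P ∧ ∀ f ∈ Bb Ω, ∫ ω, f ω ∂P ≤ E f})
    -- continuity of `E`
    (hcont : ∀ A : ℕ → Set Ω, (∀ n, MeasurableSet (A n)) → Antitone A →
      (⋂ n, A n) = ∅ →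
      Tendsto (fun n => ⨆ P : Θ, P.1 (A n)) atTop (𝓝 (0 : ENNReal)))
    -- strong ergodicity: each `Θ^{(d)}` is the convex hull of finitely many
    -- pairwise mutually singular (ergodic) probabilities
    (hext : ∀ d : ℕ, 0 < d → ∃ (nd : ℕ) (Pd : Fin nd → Measure Ω),
      (∀ i, IsProbabilityMeasure (Pd i)) ∧
      (Pairwise fun i j => (Pd i).MutuallySingular (Pd j)) ∧
      {Q ∈ Θ | Measure.map (T^[d]) Q = Q} =
        {Q | ∃ α : Fin nd → ℝ≥0, (∑ i, α i) = 1 ∧ Q = ∑ i, α i • Pd i}) :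
    ∃ d : ℕ, 0 < d ∧ ∀ l : ℕ, 0 < l →
      {Q ∈ Θ | Measure.map (T^[l]) Q = Q} ⊆ {Q ∈ Θ | Measure.map (T^[d]) Q = Q} :=
  stmt15_general T hT Θ hcont hext
end

section
/- Let (Ω, F, T) be a measurable system, V a continuous T-invariant upper probability, and P, P₀ probabilities dominated by V with P₀ T-invariant and P = P₀ on the invariant σ-algebra I. Then P is absolutely continuous with respect to P₀. -/
open MeasureTheory Filter Function Topology

/-!
Let `S` be the set of points whose forward orbit meets the `P₀`-null set `N`. Since `P₀` is
`T`-invariant, `P₀(S) = 0`. The points visiting `N` infinitely often form the invariant set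
`L = ⋂ₙ T⁻ⁿ S ⊆ S`, so `P(L) = P₀(L) = 0`. The sets `T⁻ⁿ(S \ L)` decrease to `∅`, yet all have the
same upper probability by `T`-invariance of `V`; continuity of `V` forces `V(S \ L) = 0`. Hence
`P(N) ≤ P(S) = P(S \ L) ≤ V(S \ L) = 0`.
-/

section Iterate

variable {Ω : Type*} {T : Ω → Ω}

theorem preimage_iUnion_preimage_iterate_subset (N : Set Ω) :
    T ⁻¹' ⋃ k, T^[k] ⁻¹' N ⊆ ⋃ k, T^[k] ⁻¹' N := by
  rw [Set.preimage_iUnion]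
  refine Set.iUnion_subset fun k => ?_
  rw [← Set.preimage_comp, ← iterate_succ]
  exact Set.subset_iUnion (fun k => T^[k] ⁻¹' N) (k + 1)

theorem antitone_preimage_iterate {S : Set Ω} (hS : T ⁻¹' S ⊆ S) :
    Antitone fun n => T^[n] ⁻¹' S := by
  refine antitone_nat_of_succ_le fun n => ?_
  rw [iterate_succ', Set.preimage_comp]
  exact Set.preimage_mono hS

theorem preimage_iInter_preimage_iterate {S : Set Ω} (hS : T ⁻¹' S ⊆ S) :
    T ⁻¹' ⋂ n, T^[n] ⁻¹' S = ⋂ n, T^[n] ⁻¹' S := by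
  simp_rw [Set.preimage_iInter, ← Set.preimage_comp, ← iterate_succ]
  exact (antitone_preimage_iterate hS).iInter_nat_add 1

theorem preimage_iterate_of_preimage_eq {L : Set Ω} (hL : T ⁻¹' L = L) (n : ℕ) :
    T^[n] ⁻¹' L = L := by
  rw [Set.preimage_iterate_eq]
  exact iterate_fixed hL n

end Iterate

section UpperProbability

variable {Ω : Type*} [MeasurableSpace Ω] {T : Ω → Ω} {V : Set Ω → ENNReal}

theorem apply_preimage_iterate_of_apply_preimage (hT : Measurable T)
    (hVinv : ∀ A, MeasurableSet A → V (T ⁻¹' A) = V A) {A : Set Ω} (hA : MeasurableSet A)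
    (n : ℕ) : V (T^[n] ⁻¹' A) = V A := by
  induction n with
  | zero => rfl
  | succ n ih => rw [iterate_succ, Set.preimage_comp, hVinv _ (hT.iterate n hA), ih]

theorem apply_diff_iInter_preimage_iterate_eq_zero (hT : Measurable T)
    (hcont : ∀ A : ℕ → Set Ω, (∀ n, MeasurableSet (A n)) → Antitone A → (⋂ n, A n) = ∅ →
      Tendsto (fun n => V (A n)) atTop (𝓝 0))
    (hVinv : ∀ A, MeasurableSet A → V (T ⁻¹' A) = V A) {S : Set Ω} (hSm : MeasurableSet S)
    (hS : T ⁻¹' S ⊆ S) : V (S \ ⋂ n, T^[n] ⁻¹' S) = 0 := by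
  set L := ⋂ n, T^[n] ⁻¹' S
  have hLm : MeasurableSet L := .iInter fun n => hT.iterate n hSm
  have hD : ∀ n, T^[n] ⁻¹' (S \ L) = T^[n] ⁻¹' S \ L := fun n => by
    rw [Set.preimage_sdiff, preimage_iterate_of_preimage_eq (preimage_iInter_preimage_iterate hS)]
  have hDanti : Antitone fun n => T^[n] ⁻¹' (S \ L) := fun m n hmn => by
    simp only [hD]
    exact Set.sdiff_subset_sdiff_left (antitone_preimage_iterate hS hmn)
  have hDempty : (⋂ n, T^[n] ⁻¹' (S \ L)) = ∅ := by
    refine Set.eq_empty_iff_forall_notMem.2 fun x hx => ?_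
    simp only [hD, Set.mem_iInter, Set.mem_sdiff] at hx
    exact (hx 0).2 (Set.mem_iInter.2 fun n => (hx n).1)
  have hlim := hcont _ (fun n => hT.iterate n (hSm.diff hLm)) hDanti hDempty
  simp only [apply_preimage_iterate_of_apply_preimage hT hVinv (hSm.diff hLm)] at hlim
  exact tendsto_nhds_unique tendsto_const_nhds hlim

end UpperProbability

theorem stmt19_general {Ω : Type*} [MeasurableSpace Ω] (T : Ω → Ω) (hT : Measurable T)
    (Θ : Set (Measure Ω))
    -- continuity of the upper probability `V = ⨆_{Q ∈ Θ} Q`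
    (hcont : ∀ A : ℕ → Set Ω, (∀ n, MeasurableSet (A n)) → Antitone A →
      (⋂ n, A n) = ∅ →
      Tendsto (fun n => ⨆ Q : Θ, Q.1 (A n)) atTop (𝓝 (0 : ENNReal)))
    -- `T`-invariance of the upper probability
    (hVinv : ∀ A : Set Ω, MeasurableSet A →
      (⨆ Q : Θ, Q.1 (T ⁻¹' A)) = ⨆ Q : Θ, Q.1 A)
    (P P0 : Measure Ω) (hP : P ∈ Θ)
    (hP0inv : Measure.map T P0 = P0)
    (hagree : ∀ A : Set Ω, MeasurableSet A → T ⁻¹' A = A → P A = P0 A) :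
    P ≪ P0 := by
  refine Measure.AbsolutelyContinuous.mk fun N hN hN0 => ?_
  set S := ⋃ k, T^[k] ⁻¹' N
  have hSm : MeasurableSet S := .iUnion fun k => hT.iterate k hN
  have hS : T ⁻¹' S ⊆ S := preimage_iUnion_preimage_iterate_subset N
  set L := ⋂ n, T^[n] ⁻¹' S
  have hP0S : P0 S = 0 := measure_iUnion_null fun k => by
    rw [(MeasurePreserving.iterate ⟨hT, hP0inv⟩ k).measure_preimage hN.nullMeasurableSet, hN0]
  have hPL : P L = 0 := by
    rw [hagree L (.iInter fun n => hT.iterate n hSm) (preimage_iInter_preimage_iterate hS)]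
    exact measure_mono_null (Set.iInter_subset _ 0) hP0S
  have hVSL : (⨆ Q : Θ, Q.1 (S \ L)) = 0 :=
    apply_diff_iInter_preimage_iterate_eq_zero (V := fun A => ⨆ Q : Θ, Q.1 A) hT hcont hVinv hSm hS
  have hPSL : P (S \ L) = 0 :=
    nonpos_iff_eq_zero.mp (hVSL ▸ le_iSup (fun Q : Θ => Q.1 (S \ L)) ⟨P, hP⟩)
  refine nonpos_iff_eq_zero.mp ?_
  calc P N ≤ P S := measure_mono (Set.subset_iUnion (fun k => T^[k] ⁻¹' N) 0)
    _ = P (S \ L) := (measure_sdiff_null hPL).symm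
    _ = 0 := hPSL

theorem stmt19 {Ω : Type*} [MeasurableSpace Ω] (T : Ω → Ω) (hT : Measurable T)
    (Θ : Set (Measure Ω)) (hprob : ∀ Q ∈ Θ, IsProbabilityMeasure Q)
    -- continuity of the upper probability `V = ⨆_{Q ∈ Θ} Q`
    (hcont : ∀ A : ℕ → Set Ω, (∀ n, MeasurableSet (A n)) → Antitone A →
      (⋂ n, A n) = ∅ →
      Tendsto (fun n => ⨆ Q : Θ, Q.1 (A n)) atTop (𝓝 (0 : ENNReal)))
    -- `T`-invariance of the upper probability
    (hVinv : ∀ A : Set Ω, MeasurableSet A →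
      (⨆ Q : Θ, Q.1 (T ⁻¹' A)) = ⨆ Q : Θ, Q.1 A)
    (P P0 : Measure Ω) (hP : P ∈ Θ) (hP0 : P0 ∈ Θ)
    (hP0inv : Measure.map T P0 = P0)
    (hagree : ∀ A : Set Ω, MeasurableSet A → T ⁻¹' A = A → P A = P0 A) :
    P ≪ P0 :=
  stmt19_general T hT Θ hcont hVinv P P0 hP hP0inv hagree
end
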